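/- For every real μ ≥ 0 and every real x, |e_μ(−ix)| ≤ 1. Moreover, if μ > 0 and x ≠ 0 then |e_μ(−ix)| < 1. -/

import Mathlib

open MeasureTheory
open scoped BigOperators Nat

/-- Generalized factorial `γ_μ(n)`: `γ_μ(0) = 1`,
`γ_μ(n+1) = (n + 1 + 2μ θ_{n+1}) γ_μ(n)` where `θ_k = 1` if `k` is odd, `0` if even. -/
noncomputable def genGamma (μ : ℝ) : ℕ → ℝ
  | 0 => 1
  | n + 1 => ((n : ℝ) + 1 + 2 * μ * (if (n + 1) % 2 = 1 then (1 : ℝ) else 0)) * genGamma μ n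

/-- Generalized exponential function `e_μ(z) = Σ_{n≥0} z^n / γ_μ(n)`. -/
noncomputable def genExp (μ : ℝ) (z : ℂ) : ℂ :=
  ∑' n : ℕ, z ^ n / (genGamma μ n : ℂ)

/-- Generalized Hermite polynomial
`H_n^μ(x) = n! Σ_{k=0}^{⌊n/2⌋} (-1)^k (2x)^{n-2k} / (k! γ_μ(n-2k))`. -/
noncomputable def genHermite (μ : ℝ) (n : ℕ) (x : ℂ) : ℂ :=
  (n ! : ℂ) * ∑ k ∈ Finset.range (n / 2 + 1),
    (-1) ^ k * (2 * x) ^ (n - 2 * k) / ((k ! : ℂ) * ((genGamma μ (n - 2 * k) : ℝ) : ℂ))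

/-- Dunkl operator `(D_μ f)(x) = f'(x) + (μ/x)(f(x) - f(-x))`. -/
noncomputable def dunkl (μ : ℝ) (f : ℝ → ℂ) (x : ℝ) : ℂ :=
  deriv f x + ((μ / x : ℝ) : ℂ) * (f x - f (-x))

/-- Euler beta function `B(a,b) = Γ(a)Γ(b)/Γ(a+b)`. -/
noncomputable def realBeta (a b : ℝ) : ℝ :=
  Real.Gamma a * Real.Gamma b / Real.Gamma (a + b)

/-!
Write `A(t) = e_μ(-it)` for real `t`. The coefficients of `e_μ` are real, so `conj A(t) = e_μ(it)`
and `|A(t)|² = e_μ(-it) e_μ(it)` is even in `t`. Differentiating this product and eliminating the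
derivatives with the Dunkl equation `z e_μ'(z) + μ (e_μ(z) - e_μ(-z)) = z e_μ(z)` gives
`d/dt |A(t)|² = -(4μ/t) (Im A(t))²`, which is `≤ 0` for `t > 0`. Hence `|A|²` decreases on `[0, ∞)`
from `|A(0)|² = 1`. For `μ > 0` the decrease is strict near `0`, where `Im A(t) ~ -t / γ_μ(1) < 0`.
-/
open Complex ComplexConjugate Set Topology

section GenExp

variable {μ : ℝ}

theorem genGamma_succ (μ : ℝ) (n : ℕ) :
    genGamma μ (n + 1) = (n + 1 + μ * (1 - (-1) ^ (n + 1))) * genGamma μ n := by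
  rw [genGamma]
  congr 1
  rcases Nat.even_or_odd (n + 1) with h | h
  · simp [h.neg_one_pow, Nat.even_iff.mp h]
  · simp only [Nat.odd_iff.mp h, ↓reduceIte, h.neg_one_pow]
    ring

theorem factorial_le_genGamma (hμ : 0 ≤ μ) (n : ℕ) : (n ! : ℝ) ≤ genGamma μ n := by
  induction n with
  | zero => simp [genGamma]
  | succ n ih =>
    have hθ : 0 ≤ μ * (1 - (-1) ^ (n + 1) : ℝ) :=
      mul_nonneg hμ <| sub_nonneg.mpr <| by
        rcases neg_one_pow_eq_or ℝ (n + 1) with h | h <;> simp [h]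
    rw [genGamma_succ, Nat.factorial_succ, Nat.cast_mul, Nat.cast_succ]
    exact mul_le_mul (by linarith) ih (by positivity) (by positivity)

theorem genGamma_pos (hμ : 0 ≤ μ) (n : ℕ) : 0 < genGamma μ n :=
  (Nat.cast_pos.mpr n.factorial_pos).trans_le (factorial_le_genGamma hμ n)

theorem norm_div_genGamma_le (hμ : 0 ≤ μ) (w : ℂ) (n : ℕ) :
    ‖w / genGamma μ n‖ ≤ ‖w‖ / n ! := by
  rw [norm_div, norm_real, Real.norm_of_nonneg (genGamma_pos hμ n).le]
  exact div_le_div_of_nonneg_left (norm_nonneg w) (by positivity) (factorial_le_genGamma hμ n)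

theorem summable_genExp (hμ : 0 ≤ μ) (z : ℂ) :
    Summable fun n : ℕ => z ^ n / (genGamma μ n : ℂ) :=
  .of_norm_bounded (Real.summable_pow_div_factorial ‖z‖) fun n =>
    (norm_div_genGamma_le hμ _ n).trans_eq (by rw [norm_pow])

theorem genExp_zero (μ : ℝ) : genExp μ 0 = 1 := by
  rw [genExp, tsum_eq_single 0 fun n hn => by simp [zero_pow hn]]
  simp [genGamma]

theorem conj_genExp (μ : ℝ) (z : ℂ) : conj (genExp μ z) = genExp μ (conj z) := by
  simp only [genExp, conj_tsum, map_div₀, map_pow, conj_ofReal]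

noncomputable def genExpDeriv (μ : ℝ) (z : ℂ) : ℂ :=
  ∑' n : ℕ, n * z ^ (n - 1) / (genGamma μ n : ℂ)

theorem summable_natCast_mul_pow_pred_div_factorial (r : ℝ) :
    Summable fun n : ℕ => n * r ^ (n - 1) / n ! := by
  refine (summable_nat_add_iff 1).mp ((Real.summable_pow_div_factorial r).congr fun n => ?_)
  rw [Nat.factorial_succ, Nat.cast_mul]
  field_simp
  simp

theorem norm_genExpDeriv_term_le (hμ : 0 ≤ μ) {y : ℂ} {R : ℝ} (hy : ‖y‖ ≤ R) (n : ℕ) :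
    ‖n * y ^ (n - 1) / (genGamma μ n : ℂ)‖ ≤ n * R ^ (n - 1) / n ! := by
  refine (norm_div_genGamma_le hμ _ n).trans (div_le_div_of_nonneg_right ?_ (by positivity))
  rw [norm_mul, norm_pow, norm_natCast]
  gcongr

theorem hasSum_genExpDeriv (hμ : 0 ≤ μ) (z : ℂ) :
    HasSum (fun n : ℕ => n * z ^ (n - 1) / (genGamma μ n : ℂ)) (genExpDeriv μ z) :=
  (Summable.of_norm_bounded (summable_natCast_mul_pow_pred_div_factorial ‖z‖)
    (norm_genExpDeriv_term_le hμ le_rfl)).hasSum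

theorem hasDerivAt_genExp (hμ : 0 ≤ μ) (z : ℂ) : HasDerivAt (genExp μ) (genExpDeriv μ z) z := by
  have hz : z ∈ Metric.ball (0 : ℂ) (‖z‖ + 1) := by simp
  exact hasDerivAt_tsum_of_isPreconnected (g' := fun n y => n * y ^ (n - 1) / (genGamma μ n : ℂ))
    (summable_natCast_mul_pow_pred_div_factorial (‖z‖ + 1)) Metric.isOpen_ball
    (convex_ball _ _).isPreconnected (fun n y _ => (hasDerivAt_pow n y).div_const _)
    (fun n y hy => norm_genExpDeriv_term_le hμ (mem_ball_zero_iff.mp hy).le n)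
    hz (summable_genExp hμ z) hz

theorem genExpDeriv_zero (μ : ℝ) : genExpDeriv μ 0 = 1 / genGamma μ 1 := by
  rw [genExpDeriv, tsum_eq_single 1]
  · simp
  · rintro (_ | _ | n) hn <;> simp_all

/-- Divided by `z`, this is the eigenvalue equation `D_μ e_μ = e_μ` for the Dunkl operator. -/
theorem genExp_dunkl_eq (hμ : 0 ≤ μ) (z : ℂ) :
    z * genExpDeriv μ z + μ * (genExp μ z - genExp μ (-z)) = z * genExp μ z := by
  set c : ℕ → ℂ := fun n => z * (n * z ^ (n - 1) / genGamma μ n)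
    + μ * (z ^ n / genGamma μ n - (-z) ^ n / genGamma μ n) with hc
  have hsum : HasSum c (z * genExpDeriv μ z + μ * (genExp μ z - genExp μ (-z))) :=
    ((hasSum_genExpDeriv hμ z).mul_left z).add
      (((summable_genExp hμ z).hasSum.sub (summable_genExp hμ (-z)).hasSum).mul_left _)
  have hshift (n : ℕ) : c (n + 1) = z * (z ^ n / genGamma μ n) := by
    have hγ : (genGamma μ n : ℂ) ≠ 0 := ofReal_ne_zero.mpr (genGamma_pos hμ n).ne'
    have hγ' : (genGamma μ (n + 1) : ℂ) ≠ 0 := ofReal_ne_zero.mpr (genGamma_pos hμ _).ne'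
    have hrec : (genGamma μ (n + 1) : ℂ) = (n + 1 + μ * (1 - (-1) ^ (n + 1))) * genGamma μ n :=
      mod_cast genGamma_succ μ n
    simp only [hc, Nat.add_sub_cancel, neg_pow z, Nat.cast_succ]
    field_simp
    linear_combination -z ^ (n + 1) * hrec
  have hc0 : c 0 = 0 := by simp [hc]
  refine hsum.unique ((hasSum_nat_add_iff' 1).mp ?_)
  rw [Finset.sum_range_one, hc0, sub_zero, funext hshift]
  exact (summable_genExp hμ z).hasSum.mul_left z

theorem differentiable_genExp (hμ : 0 ≤ μ) : Differentiable ℂ (genExp μ) :=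
  fun z => (hasDerivAt_genExp hμ z).differentiableAt

theorem hasDerivAt_genExp_const_mul (hμ : 0 ≤ μ) (c z : ℂ) :
    HasDerivAt (fun w => genExp μ (c * w)) (genExpDeriv μ (c * z) * c) z := by
  simpa [Function.comp_def] using
    (hasDerivAt_genExp hμ (c * z)).comp z ((hasDerivAt_id z).const_mul c)

theorem genExp_I_mul (μ t : ℝ) : genExp μ (I * t) = conj (genExp μ (-I * t)) := by
  rw [conj_genExp]
  simp

theorem norm_genExp_neg_I_mul_abs (μ t : ℝ) :
    ‖genExp μ (-I * |t|)‖ = ‖genExp μ (-I * t)‖ := by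
  rcases abs_choice t with h | h
  · rw [h]
  · rw [h, ofReal_neg, neg_mul_neg, genExp_I_mul, RCLike.norm_conj]

theorem hasDerivAt_norm_genExp_neg_I_mul_sq (hμ : 0 ≤ μ) {t : ℝ} (ht : t ≠ 0) :
    HasDerivAt (fun s : ℝ => ‖genExp μ (-I * s)‖ ^ 2)
      (-(4 * μ / t * (genExp μ (-I * t)).im ^ 2)) t := by
  convert ((hasDerivAt_genExp_const_mul hμ (-I) t).mul
    (hasDerivAt_genExp_const_mul hμ I t)).real_of_complex using 1
  · funext s
    rw [Pi.mul_apply, genExp_I_mul, mul_conj', ← ofReal_pow, ofReal_re]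
  have hB : genExp μ (I * t) = genExp μ (-I * t) - 2 * (genExp μ (-I * t)).im * I := by
    rw [genExp_I_mul, ← ofReal_ofNat, ← ofReal_mul, ← sub_conj, sub_sub_cancel]
  have hode₁ := genExp_dunkl_eq hμ (-I * t)
  have hode₂ := genExp_dunkl_eq hμ (I * t)
  rw [show -(-I * t) = I * t by ring, hB] at hode₁
  rw [show -(I * t) = -I * t by ring, hB] at hode₂
  rw [hB, ← ofReal_re (-(4 * μ / t * _ ^ 2)), eq_comm]
  set A := genExp μ (-I * t)
  set D₁ := genExpDeriv μ (-I * t)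
  set D₂ := genExpDeriv μ (I * t)
  have ht' : (t : ℂ) ≠ 0 := ofReal_ne_zero.mpr ht
  congr 1
  push_cast
  field_simp
  linear_combination (A - 2 * A.im * I) * hode₁ + A * hode₂ + 4 * μ * A.im ^ 2 * I_sq

theorem continuous_norm_genExp_neg_I_mul_sq (hμ : 0 ≤ μ) :
    Continuous fun s : ℝ => ‖genExp μ (-I * s)‖ ^ 2 := by
  have := (differentiable_genExp hμ).continuous
  fun_prop

theorem antitoneOn_norm_genExp_neg_I_mul_sq (hμ : 0 ≤ μ) :
    AntitoneOn (fun s : ℝ => ‖genExp μ (-I * s)‖ ^ 2) (Ici 0) := by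
  refine antitoneOn_of_deriv_nonpos (convex_Ici 0)
    (continuous_norm_genExp_neg_I_mul_sq hμ).continuousOn (fun s hs => ?_) (fun s hs => ?_)
  all_goals rw [interior_Ici] at hs
  · exact (hasDerivAt_norm_genExp_neg_I_mul_sq hμ hs.ne').differentiableAt.differentiableWithinAt
  · rw [(hasDerivAt_norm_genExp_neg_I_mul_sq hμ hs.ne').deriv, neg_nonpos]
    exact mul_nonneg (div_nonneg (by positivity) hs.le) (sq_nonneg _)

theorem norm_genExp_neg_I_mul_sq_le_one (hμ : 0 ≤ μ) {t : ℝ} (ht : 0 ≤ t) :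
    ‖genExp μ (-I * t)‖ ^ 2 ≤ 1 := by
  simpa [genExp_zero] using antitoneOn_norm_genExp_neg_I_mul_sq hμ self_mem_Ici ht ht

theorem eventually_im_genExp_neg_I_mul_neg (hμ : 0 ≤ μ) :
    ∀ᶠ s : ℝ in 𝓝[>] 0, (genExp μ (-I * s)).im < 0 := by
  have hderiv : HasDerivAt (fun s : ℝ => (genExp μ (-I * s)).im) (-(1 / genGamma μ 1)) 0 := by
    convert ((hasDerivAt_genExp_const_mul hμ (-I) ((0 : ℝ) : ℂ)).const_mul (-I)).real_of_complex
      using 1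
    · funext s
      simp [mul_re]
    · simp [genExpDeriv_zero]
  have hslope := hderiv.hasDerivWithinAt.limsup_slope_le' (s := Ioi 0) self_notMem_Ioi
    (neg_neg_of_pos (one_div_pos.mpr (genGamma_pos hμ 1)))
  filter_upwards [hslope, self_mem_nhdsWithin] with s hs (hs₀ : 0 < s)
  rw [slope_def_field, sub_zero, ofReal_zero, mul_zero, genExp_zero, one_im, sub_zero] at hs
  exact neg_of_div_neg_left hs hs₀.le

theorem norm_genExp_neg_I_mul_sq_lt_one (hμ : 0 < μ) {t : ℝ} (ht : 0 < t) :
    ‖genExp μ (-I * t)‖ ^ 2 < 1 := by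
  obtain ⟨ε, hε, him⟩ :=
    mem_nhdsGT_iff_exists_Ioo_subset.mp (eventually_im_genExp_neg_I_mul_neg hμ.le)
  set m := min ε t
  have hm : 0 < m := lt_min hε ht
  have hstrict : StrictAntiOn (fun s : ℝ => ‖genExp μ (-I * s)‖ ^ 2) (Icc 0 m) := by
    refine strictAntiOn_of_deriv_neg (convex_Icc 0 m)
      (continuous_norm_genExp_neg_I_mul_sq hμ.le).continuousOn fun s hs => ?_
    rw [interior_Icc] at hs
    have him_s : (genExp μ (-I * s)).im < 0 := him ⟨hs.1, hs.2.trans_le (min_le_left ε t)⟩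
    rw [(hasDerivAt_norm_genExp_neg_I_mul_sq hμ.le hs.1.ne').deriv, neg_neg_iff_pos]
    exact mul_pos (div_pos (by positivity) hs.1) (sq_pos_of_neg him_s)
  calc ‖genExp μ (-I * t)‖ ^ 2 ≤ ‖genExp μ (-I * m)‖ ^ 2 :=
        antitoneOn_norm_genExp_neg_I_mul_sq hμ.le hm.le ht.le (min_le_right ε t)
    _ < ‖genExp μ (-I * (0 : ℝ))‖ ^ 2 := hstrict ⟨le_rfl, hm.le⟩ ⟨hm.le, le_rfl⟩ hm
    _ = 1 := by simp [genExp_zero]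

end GenExp

/-- For every real `μ ≥ 0` and real `x`, `|e_μ(-ix)| ≤ 1`;
moreover if `μ > 0` and `x ≠ 0` then `|e_μ(-ix)| < 1`. -/
theorem abs_genExp_neg_I_le_one (μ : ℝ) (x : ℝ) :
    (0 ≤ μ → ‖genExp μ (-Complex.I * x)‖ ≤ 1) ∧
    (0 < μ → x ≠ 0 → ‖genExp μ (-Complex.I * x)‖ < 1) := by
  refine ⟨fun hμ => ?_, fun hμ hx => ?_⟩
  · rw [← norm_genExp_neg_I_mul_abs, ← sq_le_one_iff₀ (norm_nonneg _)]
    exact norm_genExp_neg_I_mul_sq_le_one hμ (abs_nonneg x)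
  · rw [← norm_genExp_neg_I_mul_abs, ← sq_lt_one_iff₀ (norm_nonneg _)]
    exact norm_genExp_neg_I_mul_sq_lt_one hμ (abs_pos.mpr hx)
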